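/- In the DSM implementation of the Signal object, provided no two executions of wait() are concurrent, once the object's State becomes present, any execution of wait() by a process π completes in a bounded number of π's own steps. -/

import Mathlib

/-!
The DSM implementation of a Signal object (shared bit `Bit` initialized to
absent, shared pointer `GoAddr` initialized to NIL; `signal()` writes present
to `Bit`, reads `GoAddr` into a local register, and, if non-NIL, writes `true`
through it; `wait()` allocates a fresh local boolean spin variable initialized
to `false`, publishes its address in `GoAddr`, returns immediately if `Bit` is
present, and otherwise busy-waits until the spin variable is `true`), modeled
as a transition system.

STATEMENT 0: provided no two executions of `wait()` are concurrent, in every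
run there is a point inside each execution of `signal()` (a linearization
point, between its invocation and its response) at which it appears to
atomically set the object's State to present: the abstract State determined by
these points is consistent with the specification, i.e. every `wait()` returns
only at a time by which some `signal()` has been linearized.
-/

/-- Program counters for the DSM implementation of the Signal object.
`sig1`–`sig3` are the lines of `signal()` (`sig3` carries the value read from
`GoAddr`); `wait1`–`wait5` are the lines of `wait()` (carrying the address of
the allocated spin variable); `idle` means the process runs neither. -/
inductive PC (Addr : Type) where
  | idle
  | sig1
  | sig2
  | sig3 (a : Option Addr)
  | wait1
  | wait2 (g : Addr)
  | wait3 (g : Addr)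
  | wait4 (g : Addr)
  | wait5 (g : Addr)
  deriving DecidableEq

/-- A configuration: the shared `Bit` (`true` ↔ present), the shared pointer
`GoAddr` (`none` ↔ NIL), the pool of boolean spin variables `mem`, the
allocation flags (for freshness of allocation), and all program counters. -/
structure Config (Proc Addr : Type) where
  bit : Bool
  goAddr : Option Addr
  mem : Addr → Bool
  alloc : Addr → Bool
  pc : Proc → PC Addr

/-- The process is currently executing `wait()`. -/
def InWait {Addr : Type} : PC Addr → Prop
  | PC.wait1 => True
  | PC.wait2 _ => True
  | PC.wait3 _ => True
  | PC.wait4 _ => True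
  | PC.wait5 _ => True
  | _ => False

variable {Proc Addr : Type}

/-- One atomic step of the implementation, taken by process `p`. -/
inductive Step [DecidableEq Proc] [DecidableEq Addr] :
    Config Proc Addr → Proc → Config Proc Addr → Prop where
  | invokeSignal (c : Config Proc Addr) (p : Proc) (h : c.pc p = PC.idle) :
      Step c p { c with pc := Function.update c.pc p PC.sig1 }
  | invokeWait (c : Config Proc Addr) (p : Proc) (h : c.pc p = PC.idle) :
      Step c p { c with pc := Function.update c.pc p PC.wait1 }
  | sig1 (c : Config Proc Addr) (p : Proc) (h : c.pc p = PC.sig1) :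
      Step c p { c with bit := true, pc := Function.update c.pc p PC.sig2 }
  | sig2 (c : Config Proc Addr) (p : Proc) (h : c.pc p = PC.sig2) :
      Step c p { c with pc := Function.update c.pc p (PC.sig3 c.goAddr) }
  | sig3none (c : Config Proc Addr) (p : Proc) (h : c.pc p = PC.sig3 none) :
      Step c p { c with pc := Function.update c.pc p PC.idle }
  | sig3some (c : Config Proc Addr) (p : Proc) (a : Addr)
      (h : c.pc p = PC.sig3 (some a)) :
      Step c p { c with mem := Function.update c.mem a true,
                        pc := Function.update c.pc p PC.idle }
  | wait1 (c : Config Proc Addr) (p : Proc) (g : Addr) (h : c.pc p = PC.wait1)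
      (hg : c.alloc g = false) :
      Step c p { c with alloc := Function.update c.alloc g true,
                        pc := Function.update c.pc p (PC.wait2 g) }
  | wait2 (c : Config Proc Addr) (p : Proc) (g : Addr) (h : c.pc p = PC.wait2 g) :
      Step c p { c with mem := Function.update c.mem g false,
                        pc := Function.update c.pc p (PC.wait3 g) }
  | wait3 (c : Config Proc Addr) (p : Proc) (g : Addr) (h : c.pc p = PC.wait3 g) :
      Step c p { c with goAddr := some g,
                        pc := Function.update c.pc p (PC.wait4 g) }
  | wait4tt (c : Config Proc Addr) (p : Proc) (g : Addr) (h : c.pc p = PC.wait4 g)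
      (hb : c.bit = true) :
      Step c p { c with pc := Function.update c.pc p PC.idle }
  | wait4ff (c : Config Proc Addr) (p : Proc) (g : Addr) (h : c.pc p = PC.wait4 g)
      (hb : c.bit = false) :
      Step c p { c with pc := Function.update c.pc p (PC.wait5 g) }
  | wait5tt (c : Config Proc Addr) (p : Proc) (g : Addr) (h : c.pc p = PC.wait5 g)
      (hm : c.mem g = true) :
      Step c p { c with pc := Function.update c.pc p PC.idle }
  | wait5ff (c : Config Proc Addr) (p : Proc) (g : Addr) (h : c.pc p = PC.wait5 g)
      (hm : c.mem g = false) :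
      Step c p c

/-- Initial configurations: `Bit = absent`, `GoAddr = NIL`, nothing allocated,
every process idle. -/
def Init (c : Config Proc Addr) : Prop :=
  c.bit = false ∧ c.goAddr = none ∧ (∀ a, c.alloc a = false) ∧ ∀ p, c.pc p = PC.idle

/-- A run of the implementation: an infinite interleaving of steps.  `act n`
is the process (if any) taking the step from `cfg n` to `cfg (n+1)`. -/
structure Run (Proc Addr : Type) [DecidableEq Proc] [DecidableEq Addr] where
  cfg : ℕ → Config Proc Addr
  act : ℕ → Option Proc
  init : Init (cfg 0)
  step : ∀ n, match act n with
    | none => cfg (n + 1) = cfg n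
    | some p => Step (cfg n) p (cfg (n + 1))

variable [DecidableEq Proc] [DecidableEq Addr]

/-- No two executions of `wait()` are concurrent. -/
def NoConcurrentWaits (R : Run Proc Addr) : Prop :=
  ∀ n p q, InWait ((R.cfg n).pc p) → InWait ((R.cfg n).pc q) → p = q

/-- Process `p` invokes `signal()` at step `n`. -/
def SigInvoke (R : Run Proc Addr) (n : ℕ) (p : Proc) : Prop :=
  R.act n = some p ∧ (R.cfg n).pc p = PC.idle ∧ (R.cfg (n + 1)).pc p = PC.sig1

/-- The execution of `signal()` invoked by `p` at step `n` responds at step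
`m` (its step at `m` returns the process to idle, and it was continuously
executing this operation in between). -/
def SigResponse (R : Run Proc Addr) (n : ℕ) (p : Proc) (m : ℕ) : Prop :=
  SigInvoke R n p ∧ n < m ∧ (R.cfg (m + 1)).pc p = PC.idle ∧
    ∀ j, n < j → j ≤ m → (R.cfg j).pc p ≠ PC.idle

/-- Step `t` is the response step of an execution of `wait()` by `p`. -/
def WaitReturn (R : Run Proc Addr) (t : ℕ) (p : Proc) : Prop :=
  R.act t = some p ∧ InWait ((R.cfg t).pc p) ∧ (R.cfg (t + 1)).pc p = PC.idle

/-- The object's State has become present by time `t`: some execution of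
`signal()` has been completed before `t` (its final step — line 3/4 of
`signal()`, the step from `sig3` back to idle — occurred at some step `s < t`). -/
def SignalCompletedBy (R : Run Proc Addr) (t : ℕ) : Prop :=
  ∃ s, s < t ∧ ∃ (q : Proc) (a : Option Addr),
    R.act s = some q ∧ (R.cfg s).pc q = PC.sig3 a ∧ (R.cfg (s + 1)).pc q = PC.idle

/-!
Once some `signal()` has completed, `Bit` is present and every process spinning on line 5 of
`wait()` has its spin variable set. The completing `signal()` read `GoAddr` after writing `Bit`,
so a spinning waiter had published its address before that read (a waiter publishing later
would have seen `Bit` present and not spun), and the `signal()` released it. Both facts are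
stable: no process can start spinning once `Bit` is present, and since waits are not concurrent
nobody resets a spin variable that is being spun on. From then on every step of a waiting
process either returns or moves it one line further through `wait()`, so five steps suffice.
-/

theorem card_filter_Ico_succ_top {P : ℕ → Prop} [DecidablePred P] {n m : ℕ} (h : n ≤ m) :
    ((Finset.Ico n (m + 1)).filter P).card =
      ((Finset.Ico n m).filter P).card + if P m then 1 else 0 := by
  simp only [Finset.card_filter, Finset.sum_Ico_succ_top h]

theorem exists_done_of_rank_decreasing {P done : ℕ → Prop} [DecidablePred P] {ρ : ℕ → ℕ}
    {n m : ℕ} (hstay : ∀ j, n ≤ j → ¬ P j → ρ (j + 1) = ρ j)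
    (hmove : ∀ j, n ≤ j → 0 < ρ j → P j → done (j + 1) ∨ 0 < ρ (j + 1) ∧ ρ (j + 1) < ρ j)
    (hn : 0 < ρ n) (hm : ρ n ≤ ((Finset.Ico n m).filter P).card) :
    ∃ r, n ≤ r ∧ r < m ∧ done (r + 1) := by
  have key : ∀ k, n ≤ k → (∃ r, n ≤ r ∧ r < k ∧ done (r + 1)) ∨
      0 < ρ k ∧ ρ k + ((Finset.Ico n k).filter P).card ≤ ρ n := by
    refine Nat.le_induction (Or.inr ⟨hn, by simp⟩) fun k hnk ih => ?_
    rcases ih with ⟨r, hnr, hrk, hr⟩ | ⟨hk, hbound⟩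
    · exact Or.inl ⟨r, hnr, hrk.trans k.lt_succ_self, hr⟩
    rw [card_filter_Ico_succ_top hnk]
    by_cases hP : P k
    · rcases hmove k hnk hk hP with hdone | ⟨hpos, hlt⟩
      · exact Or.inl ⟨k, hnk, k.lt_succ_self, hdone⟩
      · exact Or.inr ⟨hpos, by simp only [hP, if_true]; omega⟩
    · exact Or.inr ⟨hstay k hnk hP ▸ hk, by simp only [hP, if_false, hstay k hnk hP]; omega⟩
  rcases le_or_gt n m with hnm | hmn
  · rcases key m hnm with hdone | ⟨hpos, hbound⟩
    · exact hdone
    · omega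
  · simp [Finset.Ico_eq_empty_of_le hmn.le] at hm
    omega

namespace PC

/-- The number of steps left in `wait()` when none of them spins. -/
def waitRank {Addr : Type} : PC Addr → ℕ
  | wait1 => 5
  | wait2 _ => 4
  | wait3 _ => 3
  | wait4 _ => 2
  | wait5 _ => 1
  | _ => 0

theorem waitRank_pos {Addr : Type} {pc : PC Addr} : 0 < pc.waitRank ↔ InWait pc := by
  cases pc <;> simp [waitRank, InWait]

theorem waitRank_le_five {Addr : Type} (pc : PC Addr) : pc.waitRank ≤ 5 := by
  cases pc <;> simp [waitRank]

end PC

omit [DecidableEq Proc] [DecidableEq Addr] in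
def AtMostOneWaiter (c : Config Proc Addr) : Prop :=
  ∀ p q, InWait (c.pc p) → InWait (c.pc q) → p = q

omit [DecidableEq Proc] [DecidableEq Addr] in
theorem AtMostOneWaiter.not_inWait {c : Config Proc Addr} {q r : Proc}
    (hone : AtMostOneWaiter c) (hr : InWait (c.pc r)) (hqr : q ≠ r) : ¬ InWait (c.pc q) :=
  fun hq => hqr (hone q r hq hr)

namespace Step

variable {c c' : Config Proc Addr} {q : Proc}

theorem pc_of_ne {r : Proc} (h : Step c q c') (hr : r ≠ q) : c'.pc r = c.pc r := by
  cases h <;> simp [Function.update_of_ne hr]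

theorem bit_mono (h : Step c q c') (hb : c.bit = true) : c'.bit = true := by
  cases h <;> simp [hb]

theorem goAddr_eq (h : Step c q c') (hq : ¬ InWait (c.pc q)) : c'.goAddr = c.goAddr := by
  cases h <;> simp_all [InWait]

theorem mem_mono {g : Addr} (h : Step c q c') (hq : ¬ InWait (c.pc q)) (hg : c.mem g = true) :
    c'.mem g = true := by
  cases h <;> simp_all [InWait, Function.update_apply]

end Step

omit [DecidableEq Proc] [DecidableEq Addr] in
structure Config.Invariant (c : Config Proc Addr) : Prop where
  bit_of_sig2 : ∀ q, c.pc q = PC.sig2 → c.bit = true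
  bit_of_sig3 : ∀ q a, c.pc q = PC.sig3 a → c.bit = true
  goAddr_of_wait4 : ∀ p g, c.pc p = PC.wait4 g → c.goAddr = some g
  goAddr_of_wait5 : ∀ p g, c.pc p = PC.wait5 g → c.goAddr = some g
  read_of_wait5 : ∀ p q g a, c.pc p = PC.wait5 g → c.pc q = PC.sig3 a → a = some g

omit [DecidableEq Proc] [DecidableEq Addr] in
def Config.Signalled (c : Config Proc Addr) : Prop :=
  c.bit = true ∧ ∀ p g, c.pc p = PC.wait5 g → c.mem g = true

namespace Config

variable {c c' : Config Proc Addr} {q : Proc}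

omit [DecidableEq Proc] [DecidableEq Addr] in
theorem Invariant.of_init (h : Init c) : c.Invariant := by
  obtain ⟨-, -, -, hidle⟩ := h
  constructor <;> intros <;> simp_all

theorem Invariant.step (hinv : c.Invariant) (hone : AtMostOneWaiter c) (h : Step c q c') :
    c'.Invariant := by
  obtain ⟨hsig2, hsig3, hwait4, hwait5, hread⟩ := hinv
  refine ⟨fun r hr => ?_, fun r a hr => ?_, fun r g hr => ?_, fun r g hr => ?_,
    fun r r' g a hr hr' => ?_⟩
  · rcases eq_or_ne r q with rfl | hrq
    · cases h <;> aesop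
    · exact h.bit_mono (hsig2 r (h.pc_of_ne hrq ▸ hr))
  · rcases eq_or_ne r q with rfl | hrq
    · cases h <;> aesop
    · exact h.bit_mono (hsig3 r a (h.pc_of_ne hrq ▸ hr))
  · rcases eq_or_ne r q with rfl | hrq
    · cases h <;> aesop
    · rw [h.pc_of_ne hrq] at hr
      rw [h.goAddr_eq (hone.not_inWait (by simp [hr, InWait]) hrq.symm), hwait4 r g hr]
  · rcases eq_or_ne r q with rfl | hrq
    · cases h <;> aesop
    · rw [h.pc_of_ne hrq] at hr
      rw [h.goAddr_eq (hone.not_inWait (by simp [hr, InWait]) hrq.symm), hwait5 r g hr]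
  · rcases eq_or_ne r q with rfl | hrq
    · have hr'r : r' ≠ r := by rintro rfl; rw [hr] at hr'; cases hr'
      rw [h.pc_of_ne hr'r] at hr'
      cases h <;> aesop
    · rw [h.pc_of_ne hrq] at hr
      rcases eq_or_ne r' q with rfl | hr'q
      · cases h <;> simp -failIfUnchanged at hr' <;> aesop
      · exact hread r r' g a hr (h.pc_of_ne hr'q ▸ hr')

theorem Invariant.signalled_of_sig3 {a : Option Addr} (hinv : c.Invariant) (h : Step c q c')
    (hq : c.pc q = PC.sig3 a) : c'.Signalled := by
  refine ⟨h.bit_mono (hinv.bit_of_sig3 q a hq), fun r g hr => ?_⟩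
  have hrq : r ≠ q := by rintro rfl; cases h <;> simp_all
  rw [h.pc_of_ne hrq] at hr
  obtain rfl := hinv.read_of_wait5 r q g a hr hq
  cases h <;> simp_all

theorem Signalled.step (hsig : c.Signalled) (hone : AtMostOneWaiter c) (h : Step c q c') :
    c'.Signalled := by
  obtain ⟨hbit, hspin⟩ := hsig
  refine ⟨h.bit_mono hbit, fun r g hr => ?_⟩
  rcases eq_or_ne r q with rfl | hrq
  · cases h <;> simp -failIfUnchanged at hr <;> first | exact hspin r g hr | simp_all
  · rw [h.pc_of_ne hrq] at hr
    exact h.mem_mono (hone.not_inWait (by simp [hr, InWait]) hrq.symm) (hspin r g hr)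

theorem Signalled.wait_progress {p : Proc} (hsig : c.Signalled) (h : Step c p c')
    (hp : InWait (c.pc p)) :
    c'.pc p = PC.idle ∨ 0 < (c'.pc p).waitRank ∧ (c'.pc p).waitRank < (c.pc p).waitRank := by
  cases h
  case wait5ff g hpc hmem => simp [hsig.2 p g hpc] at hmem
  all_goals simp_all [InWait, PC.waitRank]

end Config

namespace Run

variable (R : Run Proc Addr)

theorem step_of_act {n : ℕ} {q : Proc} (h : R.act n = some q) :
    Step (R.cfg n) q (R.cfg (n + 1)) := by
  simpa [h] using R.step n

theorem cfg_succ_of_act_none {n : ℕ} (h : R.act n = none) : R.cfg (n + 1) = R.cfg n := by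
  simpa [h] using R.step n

theorem pc_succ_of_act_ne {n : ℕ} {p : Proc} (h : R.act n ≠ some p) :
    (R.cfg (n + 1)).pc p = (R.cfg n).pc p := by
  rcases hact : R.act n with _ | q
  · rw [R.cfg_succ_of_act_none hact]
  · exact (R.step_of_act hact).pc_of_ne fun hpq => h (hpq ▸ hact)

theorem cfg_le_induction {P : Config Proc Addr → Prop} {k : ℕ} (hk : P (R.cfg k))
    (hstep : ∀ n, k ≤ n → ∀ q, P (R.cfg n) → Step (R.cfg n) q (R.cfg (n + 1)) →
      P (R.cfg (n + 1))) :
    ∀ n, k ≤ n → P (R.cfg n) := by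
  refine Nat.le_induction hk fun n hkn ih => ?_
  rcases hact : R.act n with _ | q
  · rwa [R.cfg_succ_of_act_none hact]
  · exact hstep n hkn q ih (R.step_of_act hact)

variable {R}

theorem invariant (hN : NoConcurrentWaits R) (n : ℕ) : (R.cfg n).Invariant :=
  R.cfg_le_induction (Config.Invariant.of_init R.init)
    (fun n _ _ hinv h => hinv.step (hN n) h) n n.zero_le

theorem signalled_of_signalCompletedBy (hN : NoConcurrentWaits R) {n : ℕ}
    (hn : SignalCompletedBy R n) : (R.cfg n).Signalled := by
  obtain ⟨s, hsn, q, a, hact, hq, -⟩ := hn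
  exact R.cfg_le_induction ((R.invariant hN s).signalled_of_sig3 (R.step_of_act hact) hq)
    (fun n _ _ hsig h => hsig.step (hN n) h) n hsn

end Run

theorem SignalCompletedBy.mono {R : Run Proc Addr} {n m : ℕ} (h : SignalCompletedBy R n)
    (hnm : n ≤ m) : SignalCompletedBy R m := by
  obtain ⟨s, hs, rest⟩ := h
  exact ⟨s, hs.trans_le hnm, rest⟩

/-- Theorem 1(iv): in the DSM implementation of the Signal
object, provided no two executions of `wait()` are concurrent, once the
object's State has become present, any execution of `wait()` by a process `π`
completes in a bounded number of `π`'s own steps: there is a bound `b` such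
that if the State is present by time `t₀` and `π` is executing `wait()` at
time `t₀`, then after at most `b` further steps of `π` the execution of
`wait()` has returned. -/
theorem wait_bounded_once_present :
    ∃ b : ℕ, ∀ R : Run Proc Addr, NoConcurrentWaits R →
      ∀ (t₀ : ℕ) (p : Proc), SignalCompletedBy R t₀ →
        InWait ((R.cfg t₀).pc p) →
        ∀ m : ℕ,
          b ≤ ((Finset.Ico t₀ m).filter (fun j => R.act j = some p)).card →
          ∃ r, t₀ ≤ r ∧ r < m ∧ (R.cfg (r + 1)).pc p = PC.idle := by
  refine ⟨5, fun R hN t₀ p hsig hw m hm => ?_⟩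
  refine exists_done_of_rank_decreasing (P := fun j => R.act j = some p)
    (done := fun j => (R.cfg j).pc p = PC.idle) (ρ := fun j => ((R.cfg j).pc p).waitRank)
    (fun j _ hj => by simp only [R.pc_succ_of_act_ne hj]) (fun j hj hpos hact => ?_)
    (PC.waitRank_pos.mpr hw) ((PC.waitRank_le_five _).trans hm)
  exact (Run.signalled_of_signalCompletedBy hN (hsig.mono hj)).wait_progress
    (R.step_of_act hact) (PC.waitRank_pos.mp hpos)
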